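/- Let u : [0,T] → ℝ be continuous on [0,T] and twice continuously differentiable on (0,T], satisfying |u'(t)| ≤ C₀ t^{α−1} and |u''(t)| ≤ C₀ t^{α−2} for all t ∈ (0,T]. On the graded mesh t_n = T(n/N)^r, define the interpolated value u^{n,σ} = (1−σ) u(t_n) + σ u(t_{n−1}) for n ≥ 1. Then there exists a constant C, depending only on C₀, α, σ, r, T and independent of n and N, such that |u^{n,σ} − u(t_{n−σ})| ≤ C N^{−min{rα, 2}} for all 1 ≤ n ≤ N. -/

import Mathlib

/-- The graded temporal mesh `t_n = T (n/N)^r` on `[0,T]`. -/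
noncomputable def meshT (T r : ℝ) (N : ℕ) (n : ℕ) : ℝ := T * ((n : ℝ) / (N : ℝ)) ^ r

/-- The intermediate points `t_{n-σ} = (1-σ) t_n + σ t_{n-1}`. -/
noncomputable def meshTSig (T r σ : ℝ) (N : ℕ) (n : ℕ) : ℝ :=
  (1 - σ) * meshT T r N n + σ * meshT T r N (n - 1)

/-!
On the first interval `u` is only Hölder continuous, `|u y - u x| ≤ (C₀/α)(y^α - x^α)`, so the
interpolation error there is at most `(C₀/α) t₁^α ∼ N^{-rα}`. For `n ≥ 2` the error is a
second-order Taylor remainder, at most `C₀ t_{n-1}^{α-2} τ_n²`; on the graded mesh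
`t_{n-1} ≥ 2^{-r} t_n` and `τ_n ≤ r t_n / n`, so this is `≲ t_n^α / n² = T^α n^{rα-2} N^{-rα}`.
Both bounds are `≲ (n/N)^{rα} / n² ≤ N^{-min(rα, 2)}`.
-/

open Set Real

theorem abs_sub_le_sub_of_abs_deriv_le {f f' g g' : ℝ → ℝ} {a b : ℝ}
    (hf : ContinuousOn f (Icc a b)) (hg : ContinuousOn g (Icc a b))
    (hf' : ∀ x ∈ Ioo a b, HasDerivAt f (f' x) x) (hg' : ∀ x ∈ Ioo a b, HasDerivAt g (g' x) x)
    (hle : ∀ x ∈ Ioo a b, |f' x| ≤ g' x) {x y : ℝ} (hx : x ∈ Icc a b) (hy : y ∈ Icc a b)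
    (hxy : x ≤ y) : |f y - f x| ≤ g y - g x := by
  have mono : ∀ ε : ℝ, |ε| ≤ 1 → MonotoneOn (fun t => g t - ε * f t) (Icc a b) := by
    intro ε hε
    refine monotoneOn_of_hasDerivWithinAt_nonneg (f' := fun t => g' t - ε * f' t)
      (convex_Icc a b) (hg.sub (continuousOn_const.mul hf)) (fun t ht => ?_) (fun t ht => ?_)
    all_goals simp only [interior_Icc] at ht ⊢
    · exact ((hg' t ht).sub ((hf' t ht).const_mul ε)).hasDerivWithinAt
    · have : ε * f' t ≤ |f' t| :=
        calc ε * f' t ≤ |ε| * |f' t| := by rw [← abs_mul]; exact le_abs_self _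
          _ ≤ |f' t| := mul_le_of_le_one_left (abs_nonneg _) hε
      linarith [hle t ht]
  have h₁ := mono 1 (by norm_num) hx hy hxy
  have h₂ := mono (-1) (by norm_num) hx hy hxy
  simp only [one_mul, neg_one_mul] at h₁ h₂
  rw [abs_le]
  constructor <;> linarith

theorem abs_convexComb_le_of_abs_le {p q P Q σ : ℝ} (hσ0 : 0 ≤ σ) (hσ1 : σ ≤ 1)
    (hp : |p| ≤ P) (hq : |q| ≤ Q) : |(1 - σ) * p + σ * q| ≤ (1 - σ) * P + σ * Q :=
  calc |(1 - σ) * p + σ * q| ≤ (1 - σ) * |p| + σ * |q| := by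
        refine (abs_add_le _ _).trans_eq ?_
        rw [abs_mul, abs_mul, abs_of_nonneg (sub_nonneg.2 hσ1), abs_of_nonneg hσ0]
    _ ≤ (1 - σ) * P + σ * Q := by gcongr

section Interpolation

variable {f g : ℝ → ℝ} {a b σ : ℝ}

theorem abs_convexComb_sub_le_of_abs_sub_le (hσ0 : 0 ≤ σ) (hσ1 : σ ≤ 1) (hab : a ≤ b)
    (hfg : ∀ x y, a ≤ x → x ≤ y → y ≤ b → |f y - f x| ≤ g y - g x) :
    |(1 - σ) * f b + σ * f a - f ((1 - σ) * b + σ * a)| ≤ g b - g a := by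
  set x := (1 - σ) * b + σ * a
  have hax : a ≤ x := by nlinarith
  have hxb : x ≤ b := by nlinarith
  have hright := hfg x b hax hxb le_rfl
  have hleft := hfg a x le_rfl hax hxb
  rw [abs_sub_comm] at hleft
  have hgx : g x ≤ g b := (abs_nonneg _).trans hright |> sub_nonneg.1
  have hga : g a ≤ g x := (abs_nonneg _).trans hleft |> sub_nonneg.1
  calc |(1 - σ) * f b + σ * f a - f x| = |(1 - σ) * (f b - f x) + σ * (f a - f x)| := by ring_nf
    _ ≤ (1 - σ) * (g b - g x) + σ * (g x - g a) := abs_convexComb_le_of_abs_le hσ0 hσ1 hright hleft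
    _ ≤ g b - g a := by nlinarith

theorem abs_convexComb_sub_le_of_abs_deriv2_le {f' f'' : ℝ → ℝ} {M : ℝ} (hσ0 : 0 ≤ σ)
    (hσ1 : σ ≤ 1) (hab : a ≤ b)
    (hf : ∀ x ∈ Icc a b, HasDerivWithinAt f (f' x) (Icc a b) x)
    (hf' : ∀ x ∈ Icc a b, HasDerivWithinAt f' (f'' x) (Icc a b) x)
    (hM : ∀ x ∈ Icc a b, |f'' x| ≤ M) :
    |(1 - σ) * f b + σ * f a - f ((1 - σ) * b + σ * a)| ≤ M * (b - a) ^ 2 := by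
  set x := (1 - σ) * b + σ * a
  have hx : x ∈ Icc a b := ⟨by nlinarith, by nlinarith⟩
  have hM0 : 0 ≤ M := (abs_nonneg _).trans (hM a ⟨le_rfl, hab⟩)
  have dist_le : ∀ y ∈ Icc a b, ‖y - x‖ ≤ b - a := fun y hy => by
    rw [Real.norm_eq_abs, abs_sub_le_iff]; constructor <;> linarith [hx.1, hx.2, hy.1, hy.2]
  have hf'_lip : ∀ y ∈ Icc a b, ‖f' y - f' x‖ ≤ M * (b - a) := fun y hy =>
    (Convex.norm_image_sub_le_of_norm_hasDerivWithin_le hf' (by simpa using hM) (convex_Icc a b)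
      hx hy).trans (by gcongr; exact dist_le y hy)
  have taylor : ∀ y ∈ Icc a b, |f y - f x - f' x * (y - x)| ≤ M * (b - a) * (b - a) := by
    intro y hy
    have hφ : ∀ z ∈ Icc a b,
        HasDerivWithinAt (fun t => f t - f' x * t) (f' z - f' x) (Icc a b) z := fun z hz =>
      ((hf z hz).sub ((hasDerivWithinAt_id z _).const_mul (f' x))).congr_deriv (by ring)
    have := Convex.norm_image_sub_le_of_norm_hasDerivWithin_le hφ hf'_lip (convex_Icc a b) hx hy
    rw [Real.norm_eq_abs] at this
    calc |f y - f x - f' x * (y - x)| = |f y - f' x * y - (f x - f' x * x)| := by ring_nf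
      _ ≤ M * (b - a) * ‖y - x‖ := this
      _ ≤ M * (b - a) * (b - a) := by gcongr; exact dist_le y hy
  calc |(1 - σ) * f b + σ * f a - f x|
      = |(1 - σ) * (f b - f x - f' x * (b - x)) + σ * (f a - f x - f' x * (a - x))| := by
        congr 1; simp only [x]; ring
    _ ≤ (1 - σ) * (M * (b - a) * (b - a)) + σ * (M * (b - a) * (b - a)) :=
        abs_convexComb_le_of_abs_le hσ0 hσ1 (taylor b ⟨hab, le_rfl⟩) (taylor a ⟨le_rfl, hab⟩)
    _ = M * (b - a) ^ 2 := by ring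

end Interpolation

theorem div_rpow_div_sq_le {x y s : ℝ} (hx : 1 ≤ x) (hxy : x ≤ y) :
    (x / y) ^ s / x ^ 2 ≤ y ^ (-min s 2) := by
  have hx0 : 0 < x := by linarith
  have hy0 : 0 < y := by linarith
  rcases le_total s 2 with hs2 | hs2
  · have : x ^ s ≤ x ^ 2 := by simpa using rpow_le_rpow_of_exponent_le hx hs2
    rw [min_eq_left hs2, rpow_neg hy0.le]
    calc (x / y) ^ s / x ^ 2 = x ^ s / x ^ 2 * (y ^ s)⁻¹ := by rw [div_rpow hx0.le hy0.le]; ring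
      _ ≤ x ^ 2 / x ^ 2 * (y ^ s)⁻¹ := by gcongr
      _ = (y ^ s)⁻¹ := by rw [div_self (by positivity), one_mul]
  · have : (x / y) ^ s ≤ (x / y) ^ (2 : ℝ) :=
      rpow_le_rpow_of_exponent_ge (by positivity) ((div_le_one hy0).2 hxy) hs2
    rw [min_eq_right hs2, rpow_neg hy0.le]
    calc (x / y) ^ s / x ^ 2 ≤ (x / y) ^ (2 : ℝ) / x ^ 2 := by gcongr
      _ = (y ^ (2 : ℝ))⁻¹ := by
        rw [rpow_two, rpow_two]; field_simp

section Mesh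

variable {T r : ℝ} {N n : ℕ}

theorem meshT_zero (hr : r ≠ 0) : meshT T r N 0 = 0 := by
  simp [meshT, zero_rpow hr]

theorem meshT_nonneg (hT : 0 ≤ T) : 0 ≤ meshT T r N n := by
  unfold meshT; positivity

theorem meshT_pos (hT : 0 < T) (hn : n ≠ 0) (hN : N ≠ 0) : 0 < meshT T r N n := by
  unfold meshT; positivity

theorem meshT_le (hT : 0 ≤ T) (hr : 0 ≤ r) (hnN : n ≤ N) : meshT T r N n ≤ T :=
  mul_le_of_le_one_right hT <| rpow_le_one (by positivity)
    (div_le_one_of_le₀ (by exact_mod_cast hnN) (Nat.cast_nonneg _)) hr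

theorem meshT_rpow (hT : 0 ≤ T) (α : ℝ) :
    meshT T r N n ^ α = T ^ α * ((n : ℝ) / N) ^ (r * α) := by
  rw [meshT, mul_rpow hT (by positivity), ← rpow_mul (by positivity)]

theorem meshT_pred (hn : 1 ≤ n) :
    meshT T r N (n - 1) = meshT T r N n * (1 - 1 / (n : ℝ)) ^ r := by
  have hn0 : (0 : ℝ) < n := by exact_mod_cast hn
  have h : (0 : ℝ) ≤ 1 - 1 / n := sub_nonneg.2 <| (div_le_one hn0).2 (by exact_mod_cast hn)
  rw [meshT, meshT, mul_assoc, ← mul_rpow (by positivity) h, Nat.cast_sub hn, Nat.cast_one]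
  congr 2
  field_simp

theorem meshT_pred_le (hT : 0 ≤ T) (hr : 0 ≤ r) (hn : 1 ≤ n) :
    meshT T r N (n - 1) ≤ meshT T r N n := by
  have hn0 : (0 : ℝ) < n := by exact_mod_cast hn
  rw [meshT_pred hn]
  refine mul_le_of_le_one_right (meshT_nonneg hT) (rpow_le_one ?_ ?_ hr)
  · exact sub_nonneg.2 <| (div_le_one hn0).2 (by exact_mod_cast hn)
  · linarith [one_div_pos.2 hn0]

theorem meshT_sub_meshT_pred_le (hT : 0 ≤ T) (hr : 1 ≤ r) (hn : 1 ≤ n) :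
    meshT T r N n - meshT T r N (n - 1) ≤ r * meshT T r N n / n := by
  have hn0 : (0 : ℝ) < n := by exact_mod_cast hn
  have hbern : 1 + r * (-(1 / n)) ≤ (1 + -(1 / (n : ℝ))) ^ r :=
    one_add_mul_self_le_rpow_one_add (neg_le_neg <| (div_le_one hn0).2 (by exact_mod_cast hn)) hr
  rw [← sub_eq_add_neg] at hbern
  rw [meshT_pred hn]
  have := mul_le_mul_of_nonneg_left hbern (meshT_nonneg hT : 0 ≤ meshT T r N n)
  linarith [show meshT T r N n * (1 + r * -(1 / n)) = meshT T r N n - r * meshT T r N n / n by ring]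

theorem meshT_le_two_rpow_mul_meshT_pred (hT : 0 ≤ T) (hr : 0 ≤ r) (hn : 2 ≤ n) :
    meshT T r N n ≤ 2 ^ r * meshT T r N (n - 1) := by
  have hn0 : (2 : ℝ) ≤ n := by exact_mod_cast hn
  have half_le : (2 : ℝ)⁻¹ ≤ 1 - 1 / n := by
    rw [le_sub_comm, one_div]; linarith [inv_anti₀ two_pos hn0]
  have ht : 0 ≤ meshT T r N n := meshT_nonneg hT
  calc meshT T r N n = 2 ^ r * ((2 : ℝ)⁻¹ ^ r * meshT T r N n) := by
        rw [inv_rpow zero_le_two, ← mul_assoc, mul_inv_cancel₀ (by positivity), one_mul]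
    _ ≤ 2 ^ r * meshT T r N (n - 1) := by
        rw [meshT_pred (by omega), mul_comm (meshT T r N n)]
        gcongr

theorem meshT_pred_rpow_mul_sq_le {α : ℝ} (hT : 0 < T) (hr : 1 ≤ r) (hα : α ≤ 2)
    (hn : 2 ≤ n) (hN : N ≠ 0) :
    meshT T r N (n - 1) ^ (α - 2) * (meshT T r N n - meshT T r N (n - 1)) ^ 2 ≤
      2 ^ (r * (2 - α)) * r ^ 2 * meshT T r N n ^ α / n ^ 2 := by
  have hr0 : 0 ≤ r := by linarith
  set a := meshT T r N (n - 1)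
  set b := meshT T r N n
  have ha : 0 < a := meshT_pos hT (by omega) hN
  have hb : 0 < b := meshT_pos hT (by omega) hN
  have h2r : (0 : ℝ) < 2 ^ r := by positivity
  have hpow : a ^ (α - 2) ≤ 2 ^ (r * (2 - α)) * b ^ (α - 2) :=
    calc a ^ (α - 2) ≤ (b / 2 ^ r) ^ (α - 2) :=
          rpow_le_rpow_of_nonpos (by positivity)
            ((div_le_iff₀' h2r).2 (meshT_le_two_rpow_mul_meshT_pred hT.le hr0 hn)) (by linarith)
      _ = 2 ^ (r * (2 - α)) * b ^ (α - 2) := by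
          rw [div_rpow hb.le h2r.le, ← rpow_mul zero_le_two, div_eq_mul_inv,
            ← rpow_neg zero_le_two, mul_comm]
          ring_nf
  have hstep : (b - a) ^ 2 ≤ (r * b / n) ^ 2 :=
    pow_le_pow_left₀ (sub_nonneg.2 (meshT_pred_le hT.le hr0 (by omega)))
      (meshT_sub_meshT_pred_le hT.le hr (by omega)) 2
  calc a ^ (α - 2) * (b - a) ^ 2 ≤ 2 ^ (r * (2 - α)) * b ^ (α - 2) * (r * b / n) ^ 2 := by
        gcongr
    _ = 2 ^ (r * (2 - α)) * r ^ 2 * (b ^ (α - 2) * b ^ (2 : ℝ)) / n ^ 2 := by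
        rw [rpow_two]; ring
    _ = 2 ^ (r * (2 - α)) * r ^ 2 * b ^ α / n ^ 2 := by
        rw [← rpow_add hb, sub_add_cancel]

end Mesh

section RpowDerivBounds

variable {T α σ C₀ : ℝ} {u u' u'' : ℝ → ℝ}

theorem abs_sub_le_of_abs_deriv_le_rpow (hα : 0 < α) (hu : ContinuousOn u (Icc 0 T))
    (hu' : ∀ t ∈ Ioc (0 : ℝ) T, HasDerivAt u (u' t) t)
    (hb1 : ∀ t ∈ Ioc (0 : ℝ) T, |u' t| ≤ C₀ * t ^ (α - 1)) {x y : ℝ} (hx : 0 ≤ x) (hxy : x ≤ y)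
    (hyT : y ≤ T) :
    |u y - u x| ≤ C₀ / α * y ^ α - C₀ / α * x ^ α := by
  refine abs_sub_le_sub_of_abs_deriv_le (g := fun t => C₀ / α * t ^ α)
    (g' := fun t => C₀ * t ^ (α - 1)) hu ?_ (fun t ht => hu' t (Ioo_subset_Ioc_self ht))
    (fun t ht => ?_) (fun t ht => hb1 t (Ioo_subset_Ioc_self ht)) ⟨hx, hxy.trans hyT⟩
    ⟨hx.trans hxy, hyT⟩ hxy
  · exact continuousOn_const.mul (continuousOn_id.rpow_const fun _ _ => Or.inr hα.le)
  · exact ((hasDerivAt_rpow_const (Or.inl ht.1.ne')).const_mul (C₀ / α)).congr_deriv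
      (by field_simp)

theorem abs_convexComb_sub_le_of_abs_deriv_le_rpow (hα : 0 < α) (hσ0 : 0 ≤ σ) (hσ1 : σ ≤ 1)
    (hu : ContinuousOn u (Icc 0 T)) (hu' : ∀ t ∈ Ioc (0 : ℝ) T, HasDerivAt u (u' t) t)
    (hb1 : ∀ t ∈ Ioc (0 : ℝ) T, |u' t| ≤ C₀ * t ^ (α - 1)) {a b : ℝ} (ha : 0 ≤ a) (hab : a ≤ b)
    (hbT : b ≤ T) :
    |(1 - σ) * u b + σ * u a - u ((1 - σ) * b + σ * a)| ≤ C₀ / α * (b ^ α - a ^ α) := by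
  rw [mul_sub]
  exact abs_convexComb_sub_le_of_abs_sub_le (g := fun t => C₀ / α * t ^ α) hσ0 hσ1 hab
    fun x y hx hxy hyb => abs_sub_le_of_abs_deriv_le_rpow hα hu hu' hb1 (ha.trans hx) hxy
      (hyb.trans hbT)

theorem abs_convexComb_sub_le_of_abs_deriv2_le_rpow (hα : α ≤ 2) (hC₀ : 0 ≤ C₀) (hσ0 : 0 ≤ σ)
    (hσ1 : σ ≤ 1)
    (hu' : ∀ t ∈ Ioc (0 : ℝ) T, HasDerivAt u (u' t) t)
    (hu'' : ∀ t ∈ Ioc (0 : ℝ) T, HasDerivAt u' (u'' t) t)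
    (hb2 : ∀ t ∈ Ioc (0 : ℝ) T, |u'' t| ≤ C₀ * t ^ (α - 2)) {a b : ℝ} (ha : 0 < a) (hab : a ≤ b)
    (hbT : b ≤ T) :
    |(1 - σ) * u b + σ * u a - u ((1 - σ) * b + σ * a)| ≤ C₀ * a ^ (α - 2) * (b - a) ^ 2 := by
  have hsub : Icc a b ⊆ Ioc 0 T := fun t ht => ⟨ha.trans_le ht.1, ht.2.trans hbT⟩
  refine abs_convexComb_sub_le_of_abs_deriv2_le hσ0 hσ1 hab
    (fun t ht => (hu' t (hsub ht)).hasDerivWithinAt)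
    (fun t ht => (hu'' t (hsub ht)).hasDerivWithinAt) fun t ht => ?_
  calc |u'' t| ≤ C₀ * t ^ (α - 2) := hb2 t (hsub ht)
    _ ≤ C₀ * a ^ (α - 2) :=
      mul_le_mul_of_nonneg_left (rpow_le_rpow_of_nonpos ha ht.1 (by linarith)) hC₀

end RpowDerivBounds

theorem stmt9_general (T r α σ C₀ : ℝ) (hT : 0 < T) (hr : 1 ≤ r) (hα0 : 0 < α) (hα1 : α < 1)
    (hσ0 : 0 < σ) (hσ1 : σ < 1) (hC₀ : 0 < C₀)
    (u u' u'' : ℝ → ℝ)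
    (hu : ContinuousOn u (Set.Icc 0 T))
    (hu' : ∀ t ∈ Set.Ioc (0 : ℝ) T, HasDerivAt u (u' t) t)
    (hu'' : ∀ t ∈ Set.Ioc (0 : ℝ) T, HasDerivAt u' (u'' t) t)
    (hb1 : ∀ t ∈ Set.Ioc (0 : ℝ) T, |u' t| ≤ C₀ * t ^ (α - 1))
    (hb2 : ∀ t ∈ Set.Ioc (0 : ℝ) T, |u'' t| ≤ C₀ * t ^ (α - 2)) :
    ∃ C : ℝ, 0 < C ∧ ∀ N : ℕ, 2 ≤ N → ∀ n : ℕ, 1 ≤ n → n ≤ N →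
      |(1 - σ) * u (meshT T r N n) + σ * u (meshT T r N (n - 1)) -
        u (meshTSig T r σ N n)| ≤ C * (N : ℝ) ^ (-min (r * α) 2) := by
  have hr0 : 0 ≤ r := by linarith
  set K := max (C₀ / α) (C₀ * (2 ^ (r * (2 - α)) * r ^ 2))
  refine ⟨K * T ^ α, by positivity, fun N hN n hn1 hnN => ?_⟩
  have hab : meshT T r N (n - 1) ≤ meshT T r N n := meshT_pred_le hT.le hr0 hn1
  have hbT : meshT T r N n ≤ T := meshT_le hT.le hr0 hnN
  have hb0 : 0 ≤ meshT T r N n := meshT_nonneg hT.le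
  suffices h : |(1 - σ) * u (meshT T r N n) + σ * u (meshT T r N (n - 1)) -
      u (meshTSig T r σ N n)| ≤ K * meshT T r N n ^ α / n ^ 2 by
    calc _ ≤ K * meshT T r N n ^ α / n ^ 2 := h
      _ = K * T ^ α * ((n / N) ^ (r * α) / n ^ 2) := by rw [meshT_rpow hT.le]; ring
      _ ≤ K * T ^ α * N ^ (-min (r * α) 2) := by
        gcongr; exact div_rpow_div_sq_le (by exact_mod_cast hn1) (by exact_mod_cast hnN)
  rcases hn1.eq_or_lt with rfl | hn2
  · have h0 : meshT T r N (1 - 1) = 0 := meshT_zero (by positivity)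
    have := abs_convexComb_sub_le_of_abs_deriv_le_rpow hα0 hσ0.le hσ1.le hu hu' hb1 h0.ge hab hbT
    rw [h0, zero_rpow hα0.ne', sub_zero] at this
    rw [meshTSig, h0, Nat.cast_one, one_pow, div_one]
    exact this.trans (mul_le_mul_of_nonneg_right (le_max_left _ _) (by positivity))
  · calc _ ≤ C₀ * meshT T r N (n - 1) ^ (α - 2) * (meshT T r N n - meshT T r N (n - 1)) ^ 2 :=
          abs_convexComb_sub_le_of_abs_deriv2_le_rpow (by linarith) hC₀.le hσ0.le hσ1.le hu' hu''
            hb2 (meshT_pos hT (by omega) (by omega)) hab hbT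
      _ ≤ C₀ * (2 ^ (r * (2 - α)) * r ^ 2 * meshT T r N n ^ α / n ^ 2) := by
          rw [mul_assoc]
          gcongr
          exact meshT_pred_rpow_mul_sq_le hT hr (by linarith) hn2 (by omega)
      _ ≤ K * meshT T r N n ^ α / n ^ 2 := by
          rw [← mul_div_assoc, ← mul_assoc]
          gcongr
          exact le_max_right _ _

/-- Linearization error of the interpolation `u^{n,σ} = (1-σ) u(t_n) + σ u(t_{n-1})`:
for `u` continuous on `[0,T]`, twice continuously differentiable on `(0,T]` with
`|u'(t)| ≤ C₀ t^{α-1}` and `|u''(t)| ≤ C₀ t^{α-2}`, one has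
`|u^{n,σ} - u(t_{n-σ})| ≤ C N^{-min{rα,2}}` for `1 ≤ n ≤ N`, with `C` independent
of `n` and `N`. -/
theorem stmt9 (T r α σ C₀ : ℝ) (hT : 0 < T) (hr : 1 ≤ r) (hα0 : 0 < α) (hα1 : α < 1)
    (hσ0 : 0 < σ) (hσ1 : σ < 1) (hC₀ : 0 < C₀)
    (u u' u'' : ℝ → ℝ)
    (hu : ContinuousOn u (Set.Icc 0 T))
    (hu' : ∀ t ∈ Set.Ioc (0 : ℝ) T, HasDerivAt u (u' t) t)
    (hu'' : ∀ t ∈ Set.Ioc (0 : ℝ) T, HasDerivAt u' (u'' t) t)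
    (hu''c : ContinuousOn u'' (Set.Ioc 0 T))
    (hb1 : ∀ t ∈ Set.Ioc (0 : ℝ) T, |u' t| ≤ C₀ * t ^ (α - 1))
    (hb2 : ∀ t ∈ Set.Ioc (0 : ℝ) T, |u'' t| ≤ C₀ * t ^ (α - 2)) :
    ∃ C : ℝ, 0 < C ∧ ∀ N : ℕ, 2 ≤ N → ∀ n : ℕ, 1 ≤ n → n ≤ N →
      |(1 - σ) * u (meshT T r N n) + σ * u (meshT T r N (n - 1)) -
        u (meshTSig T r σ N n)| ≤ C * (N : ℝ) ^ (-min (r * α) 2) :=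
  stmt9_general T r α σ C₀ hT hr hα0 hα1 hσ0 hσ1 hC₀ u u' u'' hu hu' hu'' hb1 hb2
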